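/- arXiv:1708.05384 — 7 statements merged into one kernel-verified Lean document; each statement's English description precedes it below -/
import Mathlib

section
/- (Gordan's Lemma) Let v₁, …, v_k be vectors in ℤⁿ and let σ = {x ∈ ℝⁿ | ∀ i, ⟪vᵢ, x⟫ ≥ 0} be the rational polyhedral cone they cut out. Then the additive monoid of lattice points of σ, namely {x : Fin n → ℤ | ∀ i, ∑ j, (vᵢ j) * (x j) ≥ 0}, is a finitely generated additive monoid. -/
/-!
Writing a lattice point as `x = p - q` with `p, q ∈ ℕⁿ` and recording the slack `s = L x ∈ ℕᵏ`,
the lattice points of the cone `{x | 0 ≤ L x}` become the image of the monoid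
`{(p, q, s) | L p = L q + s}` in `ℕⁿ × ℕⁿ × ℕᵏ`. That monoid is the equalizer of two homomorphisms
out of a canonically ordered, well-quasi-ordered monoid, hence finitely generated by Dickson's
lemma (`AddSubmonoid.fg_eqLocusM`), and so is its image.
-/

open AddMonoidHom in
theorem AddSubmonoid.fg_comap_nonneg {ι κ : Type*} [Finite ι] [Finite κ]
    (L : (ι → ℤ) →+ (κ → ℤ)) : ((AddSubmonoid.nonneg (κ → ℤ)).comap L).FG := by
  let castι := (Nat.castAddMonoidHom ℤ).compLeft ι
  let f : (ι → ℕ) × (ι → ℕ) × (κ → ℕ) →+ (κ → ℤ) := (L.comp castι).comp (fst _ _)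
  let g : (ι → ℕ) × (ι → ℕ) × (κ → ℕ) →+ (κ → ℤ) :=
    (L.comp castι).comp ((fst _ _).comp (snd _ _)) +
      ((Nat.castAddMonoidHom ℤ).compLeft κ).comp ((snd _ _).comp (snd _ _))
  let φ : (ι → ℕ) × (ι → ℕ) × (κ → ℕ) →+ (ι → ℤ) :=
    castι.comp (fst _ _) - castι.comp ((fst _ _).comp (snd _ _))
  have mem_eqLocus_iff : ∀ w, f w = g w ↔ L (φ w) = (fun j => (w.2.2 j : ℤ)) := fun w => by
    change L (castι w.1) = L (castι w.2.1) + _ ↔ L (castι w.1 - castι w.2.1) = _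
    rw [map_sub, sub_eq_iff_eq_add']
    rfl
  suffices (AddSubmonoid.nonneg (κ → ℤ)).comap L = (f.eqLocusM g).map φ from
    this ▸ (AddSubmonoid.fg_eqLocusM f g).map φ
  ext x
  rw [mem_comap, mem_nonneg, mem_map]
  constructor
  · intro hx
    have hφ : φ (fun i => (x i).toNat, fun i => (-x i).toNat, fun j => (L x j).toNat) = x := by
      funext i; exact Int.toNat_sub_toNat_neg (x i)
    refine ⟨_, (mem_eqLocus_iff _).2 ?_, hφ⟩
    rw [hφ]; funext j; exact (Int.toNat_of_nonneg (hx j)).symm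
  · rintro ⟨w, hw, rfl⟩
    rw [(mem_eqLocus_iff w).1 hw]
    exact fun j => Int.natCast_nonneg _

/-- Lemma 2.2 (Gordan's Lemma): the monoid of lattice points of a rational
polyhedral cone is a finitely generated additive monoid. -/
theorem gordan_lemma (n k : ℕ) (v : Fin k → Fin n → ℤ)
    (M : AddSubmonoid (Fin n → ℤ))
    (hM : (M : Set (Fin n → ℤ)) = {x : Fin n → ℤ | ∀ i, 0 ≤ ∑ j, v i j * x j}) :
    M.FG := by
  have hM_eq :
      M = (AddSubmonoid.nonneg (Fin k → ℤ)).comap (Matrix.mulVecLin v).toAddMonoidHom := by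
    ext x
    rw [← SetLike.mem_coe, hM]
    exact Iff.rfl
  exact hM_eq ▸ AddSubmonoid.fg_comap_nonneg _
end

section
/- Let A : Fin k → (Fin m → ℤ) be a family of lattice vectors, and let φ : MvPolynomial (Fin k) ℂ → AddMonoidAlgebra ℂ (Fin m → ℤ) be the ℂ-algebra homomorphism determined by sending the variable Xᵢ to the Laurent monomial AddMonoidAlgebra.single (A i) 1. Then the kernel of φ equals the ideal of MvPolynomial (Fin k) ℂ generated by the binomials X^α − X^β, taken over all α, β : Fin k →₀ ℕ such that ∑ᵢ (α i) • (A i) = ∑ᵢ (β i) • (A i) in Fin m → ℤ. -/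
/-!
Viewing `MvPolynomial σ R` as `R[σ →₀ ℕ]`, the monomial map is `mapDomain` along the additive
weight map `w α = ∑ i, α i • A i`. Pick a section `s` of `w` over its image
and put `g = s ∘ w`. Each `x` differs from `mapDomain g x` by a combination of the binomials
`X^α - X^(g α)`, and `mapDomain g x` only depends on `mapDomain w x`, so it vanishes on the kernel.
-/

namespace AddMonoidAlgebra

variable {R M N : Type*}

variable (R) in
def fiberBinomials [Ring R] (f : M → N) : Set R[M] :=
  {x | ∃ a b, f a = f b ∧ x = single a 1 - single b 1}

section Ring

variable [Ring R]

lemma sub_mapDomain_mem_span_fiberBinomials {f : M → N} {g : M → M} (hg : ∀ a, f (g a) = f a)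
    (x : R[M]) :
    x - mapDomainLinearMap R R g x ∈ Submodule.span R (fiberBinomials R f) := by
  induction x using induction_linear with
  | zero => simp
  | add x y hx hy =>
    simpa only [map_add, add_sub_add_comm] using add_mem hx hy
  | single a r =>
    have hmem : single a 1 - single (g a) 1 ∈ fiberBinomials R f := ⟨a, g a, (hg a).symm, rfl⟩
    convert Submodule.smul_mem _ r (Submodule.subset_span hmem) using 1
    simp [smul_sub, smul_single]

theorem ker_mapDomainLinearMap (f : M → N) :
    LinearMap.ker (mapDomainLinearMap R R f) = Submodule.span R (fiberBinomials R f) := by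
  apply le_antisymm
  · intro x hx
    have hrange : mapDomainLinearMap R R (Set.rangeFactorization f) x = 0 := by
      refine mapDomain_injective Subtype.val_injective ?_
      change mapDomainLinearMap R R Subtype.val
        (mapDomainLinearMap R R (Set.rangeFactorization f) x) = mapDomain Subtype.val 0
      rw [← LinearMap.comp_apply, ← mapDomainLinearMap_comp, mapDomain_zero]
      exact hx
    set g := Set.rangeSplitting f ∘ Set.rangeFactorization f
    have hg : ∀ a, f (g a) = f a := fun a => Set.apply_rangeSplitting f _
    have hgx : mapDomainLinearMap R R g x = 0 := by
      rw [mapDomainLinearMap_comp, LinearMap.comp_apply, hrange, map_zero]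
    simpa [hgx] using sub_mapDomain_mem_span_fiberBinomials hg x
  · rw [Submodule.span_le]
    rintro _ ⟨a, b, hab, rfl⟩
    simp [hab]

theorem ker_mapDomainRingHom [AddMonoid M] [AddMonoid N] (f : M →+ N) :
    RingHom.ker (mapDomainRingHom R f) = Ideal.span (fiberBinomials R f) := by
  have hker : (RingHom.ker (mapDomainRingHom R f) : Set R[M]) =
      LinearMap.ker (mapDomainLinearMap R R f) := rfl
  have hspan : Submodule.span R (fiberBinomials R f) ≤
      (Ideal.span (fiberBinomials R f)).restrictScalars R :=
    Submodule.span_le_restrictScalars R _ _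
  apply le_antisymm
  · intro x hx
    rw [← SetLike.mem_coe, hker, SetLike.mem_coe, ker_mapDomainLinearMap] at hx
    exact hspan hx
  · rw [Ideal.span_le, hker, ker_mapDomainLinearMap]
    exact Submodule.subset_span

end Ring

end AddMonoidAlgebra

namespace MvPolynomial

variable {σ R M : Type*} [CommRing R] [AddCommMonoid M]

theorem aeval_single_eq_mapDomainAlgHom (A : σ → M) :
    aeval (fun i => AddMonoidAlgebra.single (A i) (1 : R)) =
      AddMonoidAlgebra.mapDomainAlgHom R R (Finsupp.linearCombination ℕ A).toAddMonoidHom := by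
  refine algHom_ext fun i => ?_
  rw [aeval_X, AddMonoidAlgebra.mapDomainAlgHom_apply, X, monomial, AddMonoidAlgebra.lsingle_apply,
    AddMonoidAlgebra.mapDomain_single]
  simp only [LinearMap.toAddMonoidHom_coe, Finsupp.linearCombination_single, one_smul]

theorem ker_aeval_single (A : σ → M) :
    RingHom.ker (aeval fun i => AddMonoidAlgebra.single (A i) (1 : R)) =
      Ideal.span {p | ∃ α β, Finsupp.linearCombination ℕ A α = Finsupp.linearCombination ℕ A β ∧
        p = monomial α (1 : R) - monomial β 1} := by
  rw [aeval_single_eq_mapDomainAlgHom]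
  exact AddMonoidAlgebra.ker_mapDomainRingHom _

end MvPolynomial

/-- Proposition 3.3: the kernel of the monomial map sending `X i` to the Laurent
monomial with exponent `A i` is generated by the binomials `X^α - X^β` with
`∑ i, α i • A i = ∑ i, β i • A i`. -/
theorem toric_ideal_generated_by_binomials
    (k m : ℕ) (A : Fin k → (Fin m → ℤ)) :
    RingHom.ker (MvPolynomial.aeval
        (fun i => AddMonoidAlgebra.single (A i) (1 : ℂ)) :
        MvPolynomial (Fin k) ℂ →ₐ[ℂ] AddMonoidAlgebra ℂ (Fin m → ℤ)) =
      Ideal.span {p : MvPolynomial (Fin k) ℂ |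
        ∃ α β : Fin k →₀ ℕ,
          (∑ i, (α i) • A i) = (∑ i, (β i) • A i) ∧
          p = MvPolynomial.monomial α (1 : ℂ) - MvPolynomial.monomial β (1 : ℂ)} := by
  simpa only [Finsupp.linearCombination_apply, Finsupp.sum_fintype, zero_smul, implies_true]
    using MvPolynomial.ker_aeval_single A
end

section
/- Let I be a prime ideal of MvPolynomial (Fin n) ℂ that is generated by a set of pure-difference binomials, each of the form X^α − X^β with α, β : Fin n →₀ ℕ. Then I is a lattice ideal: there exists an additive subgroup L of Fin n → ℤ such that I equals the ideal generated by all binomials X^α − X^β with α, β : Fin n →₀ ℕ satisfying (fun i => (α i : ℤ) − (β i : ℤ)) ∈ L. -/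
open MvPolynomial

/-- The lattice of exponent differences of pure-difference binomials lying in `I`. -/
def binomialLattice (n : ℕ) (I : Ideal (MvPolynomial (Fin n) ℂ)) :
    AddSubgroup (Fin n → ℤ) where
  carrier := { u | ∃ α β : Fin n →₀ ℕ,
        u = (fun i => (α i : ℤ) - β i) ∧ monomial α (1 : ℂ) - monomial β 1 ∈ I }
  zero_mem' := ⟨0, 0, by funext i; simp, by simp⟩
  add_mem' := by
    rintro u v ⟨α, β, rfl, hu⟩ ⟨γ, δ, rfl, hv⟩
    refine ⟨α + γ, β + δ, ?_, ?_⟩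
    · funext i; simp only [Pi.add_apply, Finsupp.add_apply]; push_cast; ring
    · have hsplit : monomial (α + γ) (1 : ℂ) - monomial (β + δ) 1
          = monomial γ 1 * (monomial α 1 - monomial β 1)
            + monomial β 1 * (monomial γ 1 - monomial δ 1) := by
        simp only [mul_sub, monomial_mul, one_mul]
        rw [show γ + α = α + γ from add_comm _ _,
            show γ + β = β + γ from add_comm _ _]
        ring
      rw [hsplit]
      exact I.add_mem (I.mul_mem_left _ hu) (I.mul_mem_left _ hv)
  neg_mem' := by
    rintro u ⟨α, β, rfl, hu⟩
    refine ⟨β, α, by funext i; simp only [Pi.neg_apply]; ring, ?_⟩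
    have h : monomial β (1 : ℂ) - monomial α 1 = -(monomial α 1 - monomial β 1) := by ring
    rw [h]; exact I.neg_mem hu

/-- Proposition 3.5 (one direction): a prime ideal of `ℂ[X₁,…,Xₙ]` generated by
pure-difference binomials `X^α - X^β` is a lattice ideal. -/
theorem prime_binomial_ideal_is_lattice_ideal
    (n : ℕ) (I : Ideal (MvPolynomial (Fin n) ℂ)) (hI : I.IsPrime)
    (S : Set (MvPolynomial (Fin n) ℂ))
    (hS : ∀ p ∈ S, ∃ α β : Fin n →₀ ℕ,
      p = MvPolynomial.monomial α (1 : ℂ) - MvPolynomial.monomial β (1 : ℂ))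
    (hgen : I = Ideal.span S) :
    ∃ L : AddSubgroup (Fin n → ℤ),
      I = Ideal.span {p : MvPolynomial (Fin n) ℂ |
        ∃ α β : Fin n →₀ ℕ,
          (fun i => (α i : ℤ) - (β i : ℤ)) ∈ L ∧
          p = MvPolynomial.monomial α (1 : ℂ) - MvPolynomial.monomial β (1 : ℂ)} := by
  classical
  have hIker : ∀ q ∈ I, eval (fun _ : Fin n => (1 : ℂ)) q = 0 := by
    intro q hq
    rw [hgen] at hq
    have hle : Ideal.span S ≤ RingHom.ker (eval (fun _ : Fin n => (1 : ℂ))) := by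
      rw [Ideal.span_le]
      intro p hp
      obtain ⟨α, β, rfl⟩ := hS p hp
      simp [RingHom.mem_ker, eval_monomial, Finsupp.prod]
    exact hle hq
  have hmono : ∀ γ : Fin n →₀ ℕ, monomial γ (1 : ℂ) ∉ I := by
    intro γ hγ
    have := hIker _ hγ
    simp [eval_monomial, Finsupp.prod] at this
  have key : ∀ (α β α' β' : Fin n →₀ ℕ),
      (∀ i, (α i : ℤ) - β i = (α' i : ℤ) - β' i) →
      monomial α' (1 : ℂ) - monomial β' 1 ∈ I →
      monomial α (1 : ℂ) - monomial β 1 ∈ I := by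
    intro α β α' β' h hmem
    have hadd : β' + α = β + α' := by
      ext i
      have := h i
      simp only [Finsupp.add_apply]
      omega
    have hprod : monomial β' (1 : ℂ) * (monomial α 1 - monomial β 1)
        = monomial β 1 * (monomial α' 1 - monomial β' 1) := by
      simp only [mul_sub, monomial_mul, one_mul]
      rw [hadd, show β' + β = β + β' from add_comm _ _]
    have hin : monomial β' (1 : ℂ) * (monomial α 1 - monomial β 1) ∈ I := by
      rw [hprod]; exact I.mul_mem_left _ hmem
    rcases hI.mem_or_mem hin with h1 | h1
    · exact absurd h1 (hmono β')
    · exact h1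
  refine ⟨binomialLattice n I, le_antisymm ?_ ?_⟩
  · rw [hgen]
    apply Ideal.span_le.mpr
    intro p hp
    obtain ⟨α, β, rfl⟩ := hS p hp
    apply Ideal.subset_span
    exact ⟨α, β, ⟨α, β, rfl, Ideal.subset_span hp⟩, rfl⟩
  · apply Ideal.span_le.mpr
    rintro p ⟨α, β, ⟨α', β', heq, hmem⟩, rfl⟩
    exact key α β α' β' (fun i => congrFun heq i) hmem
end

section
/- Let f and g be nonzero polynomials in MvPolynomial (Fin n) ℂ. For a polynomial p, let N(p) denote the convex hull in ℝⁿ of the set {(fun i => (d i : ℝ)) | d ∈ p.support} of its exponent vectors viewed as real vectors (its Newton polytope). Then N(f * g) = N(f) + N(g), where the sum on the right is the Minkowski sum of subsets of ℝⁿ. -/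
open scoped Pointwise

/-- The Newton polytope of a multivariate polynomial: the convex hull in `ℝⁿ` of
its exponent vectors. -/
noncomputable def newtonPolytope (n : ℕ) (p : MvPolynomial (Fin n) ℂ) :
    Set (Fin n → ℝ) :=
  convexHull ℝ ((fun d : Fin n →₀ ℕ => (fun i => (d i : ℝ))) '' (p.support : Set (Fin n →₀ ℕ)))

/-!
Every exponent of `f * g` is a sum of exponents of `f` and of `g`, which gives
`N(f * g) ⊆ N(f) + N(g)`. For the converse, by Hahn–Banach it suffices that every linear
functional `ℓ` attains its maximum over `N(f) + N(g)` at an exponent of `f * g`. Restrict to the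
exponents of `f` and of `g` on which `ℓ` is maximal: since `ℕⁿ` has unique sums, some `a + b`
with `a`, `b` among them is a sum of exponents of `f` and `g` in only one way (by maximality,
any other decomposition would also lie on these faces), so the coefficient of `f * g` at `a + b`
is `f_a * g_b ≠ 0`.
-/

namespace MvPolynomial

theorem exists_mem_support_mul_map_eq_add
    {σ R M : Type*} [CommSemiring R] [NoZeroDivisors R]
    [AddCommMonoid M] [PartialOrder M] [IsOrderedCancelAddMonoid M]
    (φ : (σ →₀ ℕ) →+ M) {f g : MvPolynomial σ R} {a b : σ →₀ ℕ}
    (ha : a ∈ f.support) (hb : b ∈ g.support)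
    (ha_max : ∀ a' ∈ f.support, φ a' ≤ φ a) (hb_max : ∀ b' ∈ g.support, φ b' ≤ φ b) :
    ∃ d ∈ (f * g).support, φ d = φ a + φ b := by
  classical
  obtain ⟨a₀, ha₀, b₀, hb₀, huniq⟩ := UniqueSums.uniqueAdd_of_nonempty
    (A := f.support.filter (φ · = φ a)) (B := g.support.filter (φ · = φ b))
    ⟨a, by simp [ha]⟩ ⟨b, by simp [hb]⟩
  rw [Finset.mem_filter] at ha₀ hb₀
  have huniq' : UniqueAdd f.support g.support a₀ b₀ := by
    intro a' b' ha' hb' hsum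
    have hφ := congrArg φ hsum
    rw [map_add, map_add, ha₀.2, hb₀.2,
      add_eq_add_iff_eq_and_eq (ha_max a' ha') (hb_max b' hb')] at hφ
    exact huniq (by simp [ha', hφ.1]) (by simp [hb', hφ.2]) hsum
  refine ⟨a₀ + b₀, ?_, by rw [map_add, ha₀.2, hb₀.2]⟩
  rw [mem_support_iff, coeff, AddMonoidAlgebra.coeff_mul_add_of_uniqueAdd huniq']
  exact mul_ne_zero (mem_support_iff.mp ha₀.1) (mem_support_iff.mp hb₀.1)

end MvPolynomial

theorem mem_convexHull_of_forall_exists_le {E : Type*} [TopologicalSpace E] [AddCommGroup E]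
    [IsTopologicalAddGroup E] [Module ℝ E] [ContinuousSMul ℝ E] [LocallyConvexSpace ℝ E]
    [T2Space E] {s : Set E} (hs : s.Finite) {x : E}
    (h : ∀ ℓ : StrongDual ℝ E, ∃ y ∈ s, ℓ x ≤ ℓ y) : x ∈ convexHull ℝ s := by
  by_contra hx
  obtain ⟨ℓ, u, hℓs, hℓx⟩ := geometric_hahn_banach_closed_point (convex_convexHull ℝ s)
    (hs.isCompact_convexHull (𝕜 := ℝ)).isClosed hx
  obtain ⟨y, hy, hxy⟩ := h ℓ
  linarith [hℓs y (subset_convexHull ℝ s hy)]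

theorem exists_max_of_mem_convexHull_image {𝕜 E ι : Type*} [Field 𝕜] [LinearOrder 𝕜]
    [IsStrictOrderedRing 𝕜] [AddCommGroup E] [Module 𝕜 E] (ℓ : E →ₗ[𝕜] 𝕜) (v : ι → E)
    {s : Finset ι} {y : E} (hy : y ∈ convexHull 𝕜 (v '' s)) :
    ∃ a ∈ s, ℓ y ≤ ℓ (v a) ∧ ∀ a' ∈ s, ℓ (v a') ≤ ℓ (v a) := by
  obtain ⟨_, ⟨a', ha', rfl⟩, hya'⟩ :=
    (ℓ.convexOn convex_univ).exists_ge_of_mem_convexHull (Set.subset_univ _) hy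
  obtain ⟨a, ha, ha_max⟩ := s.exists_max_image (fun a => ℓ (v a)) ⟨a', ha'⟩
  exact ⟨a, ha, hya'.trans (ha_max a' ha'), ha_max⟩

noncomputable def realExponent (σ : Type*) : (σ →₀ ℕ) →+ (σ → ℝ) :=
  Finsupp.coeFnAddHom.comp (Finsupp.mapRange.addMonoidHom (Nat.castAddMonoidHom ℝ))

theorem newtonPolytope_mul_general (n : ℕ) (f g : MvPolynomial (Fin n) ℂ) :
    newtonPolytope n (f * g) = newtonPolytope n f + newtonPolytope n g := by
  let e := realExponent (Fin n)
  change convexHull ℝ (e '' _) = convexHull ℝ (e '' _) + convexHull ℝ (e '' _)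
  refine subset_antisymm ?_ fun x hx => ?_
  · rw [← convexHull_add, ← Set.image_add]
    exact convexHull_mono (Set.image_mono (mod_cast MvPolynomial.support_mul f g))
  refine mem_convexHull_of_forall_exists_le ((f * g).support.finite_toSet.image e) fun ℓ => ?_
  obtain ⟨y, hy, z, hz, rfl⟩ := hx
  obtain ⟨a, ha, hya, ha_max⟩ := exists_max_of_mem_convexHull_image ℓ.toLinearMap e hy
  obtain ⟨b, hb, hzb, hb_max⟩ := exists_max_of_mem_convexHull_image ℓ.toLinearMap e hz
  obtain ⟨d, hd, hd_eq⟩ := MvPolynomial.exists_mem_support_mul_map_eq_add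
    (ℓ.toLinearMap.toAddMonoidHom.comp e) ha hb ha_max hb_max
  refine ⟨e d, Set.mem_image_of_mem e hd, ?_⟩
  calc ℓ (y + z) = ℓ y + ℓ z := map_add ℓ y z
    _ ≤ ℓ (e a) + ℓ (e b) := add_le_add hya hzb
    _ = ℓ (e d) := hd_eq.symm

/-- The Newton polytope of a product of nonzero polynomials is the Minkowski sum
of the Newton polytopes of the factors. -/
theorem newtonPolytope_mul (n : ℕ) (f g : MvPolynomial (Fin n) ℂ)
    (hf : f ≠ 0) (hg : g ≠ 0) :
    newtonPolytope n (f * g) = newtonPolytope n f + newtonPolytope n g :=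
  newtonPolytope_mul_general n f g
end

section
/- Let M be an additive submonoid of Fin n → ℤ and let m ∈ M. Let M' be the additive submonoid of Fin n → ℤ generated by M ∪ {−m}. Then there is a ℂ-algebra isomorphism between AddMonoidAlgebra ℂ M' and the localization of AddMonoidAlgebra ℂ M away from the element AddMonoidAlgebra.single m 1 (i.e., Localization.Away (single m 1)). -/
/-!
Every element of `M'` has the form `x - j • m` with `x ∈ M`, so `ℂ[M']` is obtained from the
subalgebra `ℂ[M]` by adjoining the inverse of the unit `χ^m`; as `ℂ[M] → ℂ[M']` is injective, this
is exactly the universal property of the localization away from `χ^m`.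
-/

open AddMonoidAlgebra

theorem AddSubmonoid.exists_add_nsmul_mem_of_mem_closure_union_neg {G : Type*} [AddCommGroup G]
    {M : AddSubmonoid G} {m x : G} (hx : x ∈ closure ((M : Set G) ∪ {-m})) :
    ∃ j : ℕ, x + j • m ∈ M := by
  induction hx using closure_induction with
  | mem x hx =>
    rcases hx with hx | rfl
    · exact ⟨0, by simpa using hx⟩
    · exact ⟨1, by simp⟩
  | zero => exact ⟨0, by simp⟩
  | add x y _ _ hx hy =>
    obtain ⟨i, hi⟩ := hx
    obtain ⟨j, hj⟩ := hy
    refine ⟨i + j, ?_⟩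
    rw [add_nsmul, add_add_add_comm]
    exact M.add_mem hi hj

namespace AddMonoidAlgebra

variable {k M N : Type*} [CommSemiring k] [AddCommMonoid M] [AddCommMonoid N]

theorem isUnit_single_one_of_isAddUnit {a : N} (ha : IsAddUnit a) : IsUnit (single a (1 : k)) := by
  obtain ⟨b, hab⟩ := ha.exists_neg
  exact .of_mul_eq_one (single b 1) (by rw [single_mul_single, hab, mul_one, one_def])

theorem exists_mul_single_nsmul_eq_mapDomain (f : M →+ N) (m : M)
    (hf : ∀ y : N, ∃ j : ℕ, y + j • f m ∈ Set.range f) (z : k[N]) :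
    ∃ (j : ℕ) (x : k[M]), z * single (j • f m) 1 = mapDomainRingHom k f x := by
  induction z using AddMonoidAlgebra.induction with
  | zero => exact ⟨0, 0, by simp⟩
  | single_add a c w _ _ ih =>
    obtain ⟨i, a', ha'⟩ := hf a
    obtain ⟨j, x, hx⟩ := ih
    refine ⟨i + j, single (a' + j • m) c + x * single (i • m) 1, ?_⟩
    have hφ (b : M) (r : k) : mapDomainRingHom k f (single b r) = single (f b) r := mapDomain_single
    rw [map_add, map_mul, hφ, hφ, ← hx, map_add, ha', map_nsmul, map_nsmul, mul_assoc,
      single_mul_single, add_mul, single_mul_single, mul_one, mul_one, add_nsmul, add_assoc,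
      add_comm (j • f m)]

theorem isLocalizationAway_of_mapDomain [Algebra k[M] k[N]] (f : M →+ N)
    (hf : algebraMap k[M] k[N] = mapDomainRingHom k f) (m : M) (hinj : Function.Injective f)
    (hunit : IsAddUnit (f m)) (hsurj : ∀ y : N, ∃ j : ℕ, y + j • f m ∈ Set.range f) :
    IsLocalization.Away (single m (1 : k)) k[N] where
  map_units := by
    rintro ⟨_, j, rfl⟩
    rw [hf, map_pow, mapDomainRingHom_apply, mapDomain_single]
    exact (isUnit_single_one_of_isAddUnit hunit).pow j
  surj z := by
    obtain ⟨j, x, hx⟩ := exists_mul_single_nsmul_eq_mapDomain f m hsurj z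
    refine ⟨(x, ⟨single m 1 ^ j, j, rfl⟩), ?_⟩
    rw [hf, map_pow, mapDomainRingHom_apply, mapDomain_single, single_pow, one_pow, hx]
  exists_of_eq {x y} h := by
    rw [hf] at h
    exact ⟨1, by rw [mapDomain_injective hinj h]⟩

noncomputable def equivLocalizationAwaySingle (f : M →+ N) (m : M)
    (hinj : Function.Injective f) (hunit : IsAddUnit (f m))
    (hsurj : ∀ y : N, ∃ j : ℕ, y + j • f m ∈ Set.range f) :
    k[N] ≃ₐ[k] Localization.Away (single m (1 : k)) :=
  letI : Algebra k[M] k[N] := (mapDomainRingHom k f).toAlgebra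
  haveI : IsScalarTower k k[M] k[N] :=
    .of_algebraMap_eq fun r => ((mapDomainAlgHom k k f).commutes r).symm
  haveI := isLocalizationAway_of_mapDomain (k := k) f rfl m hinj hunit hsurj
  (IsLocalization.algEquiv (.powers (single m (1 : k))) k[N] _).restrictScalars k

end AddMonoidAlgebra

/-- Lemma 3.7 (algebraic content): inverting the character `χ^m` of the monoid
algebra of `M` corresponds to adjoining `-m` to the monoid: there is a
ℂ-algebra isomorphism
`AddMonoidAlgebra ℂ M' ≃ₐ[ℂ] Localization.Away (single m 1)`,
where `M'` is generated by `M ∪ {-m}`. -/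
theorem monoidAlgebra_adjoin_neg_iso_localization_away
    (n : ℕ) (M : AddSubmonoid (Fin n → ℤ)) (m : Fin n → ℤ) (hm : m ∈ M)
    (M' : AddSubmonoid (Fin n → ℤ))
    (hM' : M' = AddSubmonoid.closure ((M : Set (Fin n → ℤ)) ∪ {-m})) :
    Nonempty (AddMonoidAlgebra ℂ M' ≃ₐ[ℂ]
      Localization.Away (AddMonoidAlgebra.single (⟨m, hm⟩ : M) (1 : ℂ))) := by
  have hle : M ≤ M' := fun x hx => hM'.ge (AddSubmonoid.subset_closure (.inl hx))
  have hneg : -m ∈ M' := hM'.ge (AddSubmonoid.subset_closure (.inr rfl))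
  refine ⟨equivLocalizationAwaySingle (AddSubmonoid.inclusion hle) _
    (AddSubmonoid.inclusion_injective hle) (.of_add_eq_zero ⟨-m, hneg⟩ ?_) fun y => ?_⟩
  · ext1; simp
  · obtain ⟨j, hj⟩ := AddSubmonoid.exists_add_nsmul_mem_of_mem_closure_union_neg (hM'.le y.2)
    exact ⟨j, ⟨_, hj⟩, rfl⟩
end

section
/- Let a, b : Fin m → ℤ with a ≠ b and let α, β ∈ ℝ with α > 0 and β > 0. Consider the steady-state set S = {x : Fin m → ℝ | (∀ i, 0 < x i) ∧ α * ∏ i, (x i) ^ (a i) = β * ∏ i, (x i) ^ (b i)} (integer powers). Then: (1) S is nonempty; and (2) S is a coset of the subgroup G = {z : Fin m → ℝ | (∀ i, 0 < z i) ∧ ∏ i, (z i) ^ (a i − b i) = 1} of the positive torus: for every y ∈ S and every x with all coordinates positive, x ∈ S if and only if (fun i => x i / y i) ∈ G. -/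
/-- The steady-state set of one S-system equation in the positive orthant. -/
def ssystemSteadyState (m : ℕ) (a b : Fin m → ℤ) (α β : ℝ) : Set (Fin m → ℝ) :=
  {x : Fin m → ℝ | (∀ i, 0 < x i) ∧
    α * ∏ i, (x i) ^ (a i) = β * ∏ i, (x i) ^ (b i)}

/-- The subtorus of the positive torus cut out by the exponent vector `a - b`. -/
def ssystemSubtorus (m : ℕ) (a b : Fin m → ℤ) : Set (Fin m → ℝ) :=
  {z : Fin m → ℝ | (∀ i, 0 < z i) ∧ ∏ i, (z i) ^ (a i - b i) = 1}

private lemma ssystem_mem_iff (m : ℕ) (a b : Fin m → ℤ) (α β : ℝ) (hα : 0 < α)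
    (x : Fin m → ℝ) (hx : ∀ i, 0 < x i) :
    x ∈ ssystemSteadyState m a b α β ↔ ∏ i, (x i) ^ (a i - b i) = β / α := by
  have hQ : (0:ℝ) < ∏ i, (x i) ^ (b i) :=
    Finset.prod_pos fun i _ => zpow_pos (hx i) _
  have hprod : ∏ i, (x i) ^ (a i - b i) = (∏ i, (x i) ^ (a i)) / ∏ i, (x i) ^ (b i) := by
    rw [← Finset.prod_div_distrib]
    exact Finset.prod_congr rfl fun i _ => zpow_sub₀ (hx i).ne' _ _
  constructor
  · rintro ⟨-, h⟩
    rw [hprod]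
    field_simp
    linarith [h]
  · intro h
    refine ⟨hx, ?_⟩
    rw [hprod] at h
    field_simp at h
    linarith [h]

/-- Theorem 4.4 (torus invariance): the steady-state set of an S-system equation
is nonempty and is a coset of a subtorus of the positive torus. -/
theorem ssystem_steadyState_is_coset
    (m : ℕ) (a b : Fin m → ℤ) (hab : a ≠ b) (α β : ℝ) (hα : 0 < α) (hβ : 0 < β) :
    (ssystemSteadyState m a b α β).Nonempty ∧
    ∀ y ∈ ssystemSteadyState m a b α β, ∀ x : Fin m → ℝ, (∀ i, 0 < x i) →
      (x ∈ ssystemSteadyState m a b α β ↔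
        (fun i => x i / y i) ∈ ssystemSubtorus m a b) := by
  obtain ⟨j, hj⟩ := Function.ne_iff.mp hab
  have hd : a j - b j ≠ 0 := sub_ne_zero_of_ne hj
  have hq : (0:ℝ) < β / α := div_pos hβ hα
  constructor
  · -- nonempty
    set c : ℝ := (β / α) ^ (((a j - b j : ℤ) : ℝ))⁻¹ with hc
    have hcpos : 0 < c := Real.rpow_pos_of_pos hq _
    set x : Fin m → ℝ := fun i => if i = j then c else 1 with hxdef
    have hxpos : ∀ i, 0 < x i := by
      intro i; by_cases h : i = j <;> simp [hxdef, h, hcpos]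
    refine ⟨x, (ssystem_mem_iff m a b α β hα x hxpos).mpr ?_⟩
    have hprod : ∏ i, (x i) ^ (a i - b i) = c ^ (a j - b j) := by
      rw [Finset.prod_eq_single j]
      · simp [hxdef]
      · intro i _ hij; simp [hxdef, hij]
      · simp
    rw [hprod, ← Real.rpow_intCast c, hc, ← Real.rpow_mul hq.le,
      inv_mul_cancel₀ (by exact_mod_cast hd), Real.rpow_one]
  · intro y hy x hx
    have hypos := hy.1
    have hyeq := (ssystem_mem_iff m a b α β hα y hypos).mp hy
    rw [ssystem_mem_iff m a b α β hα x hx]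
    have hdiv : ∀ i, 0 < x i / y i := fun i => div_pos (hx i) (hypos i)
    have hP : ∏ i, (x i / y i) ^ (a i - b i)
        = (∏ i, (x i) ^ (a i - b i)) / ∏ i, (y i) ^ (a i - b i) := by
      rw [← Finset.prod_div_distrib]
      exact Finset.prod_congr rfl fun i _ => div_zpow _ _ _
    have hYpos : (0:ℝ) < ∏ i, (y i) ^ (a i - b i) := by
      rw [hyeq]; exact hq
    constructor
    · intro h
      exact ⟨hdiv, by rw [hP, h, hyeq, div_self hq.ne']⟩
    · rintro ⟨-, h⟩
      rw [hP, hyeq, div_eq_one_iff_eq hq.ne'] at h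
      exact h
end

section
/- Let v₁, …, v_k be vectors in ℤⁿ and let M = {x : Fin n → ℤ | ∀ i, ∑ j, (vᵢ j) * (x j) ≥ 0} be the additive monoid of lattice points of the rational polyhedral cone they cut out. Then the monoid algebra AddMonoidAlgebra ℂ M is a finitely generated ℂ-algebra (it is of finite type over ℂ). -/
/-!
A lattice point `x` lies in the cone `{x | 0 ≤ A x}` exactly when `A x = s` for some slack vector
`s ∈ ℕᵏ`. Over a well-quasi-ordered, canonically ordered monoid such as `ℕᵐ`, the pairs `(x, s)`
solving this equation form a finitely generated monoid (Gordan's lemma, via Dickson's lemma), and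
the cone is its image under `(x, s) ↦ x`. A finitely generated commutative monoid such as `ℤⁿ` is
a quotient of some `ℕᵐ`, so its cones are again finitely generated, and the monoid algebra of a
finitely generated monoid is of finite type.
-/

namespace AddSubmonoid

variable {κ : Type*}

theorem comap_nonneg_eq_map_eqLocusM {D : Type*} [AddCommMonoid D] (F : D →+ (κ → ℤ)) :
    (nonneg (κ → ℤ)).comap F =
      ((F.comp (AddMonoidHom.fst D (κ → ℕ))).eqLocusM
        ((AddMonoidHom.compLeft (Nat.castAddMonoidHom ℤ) κ).comp
          (AddMonoidHom.snd D (κ → ℕ)))).map (AddMonoidHom.fst D (κ → ℕ)) := by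
  ext d
  simp only [mem_comap, mem_nonneg, mem_map, AddMonoidHom.mem_eqLocusM, Prod.exists,
    AddMonoidHom.coe_comp, Function.comp_apply, AddMonoidHom.coe_fst, AddMonoidHom.coe_snd,
    exists_and_right, exists_eq_right]
  constructor
  · intro hd
    exact ⟨fun i => (F d i).toNat, funext fun i => (Int.toNat_of_nonneg (hd i)).symm⟩
  · rintro ⟨s, hs⟩ i
    rw [hs]
    exact Int.natCast_nonneg (s i)

theorem fg_comap_nonneg_of_wellQuasiOrderedLE [Finite κ] {D : Type*} [AddCommMonoid D]
    [PartialOrder D] [WellQuasiOrderedLE D] [IsOrderedCancelAddMonoid D] [CanonicallyOrderedAdd D]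
    (F : D →+ (κ → ℤ)) : ((nonneg (κ → ℤ)).comap F).FG := by
  rw [comap_nonneg_eq_map_eqLocusM]
  exact (fg_eqLocusM _ _).map _

theorem fg_comap_nonneg_s16 [Finite κ] {G : Type*} [AddCommMonoid G] [AddMonoid.FG G]
    (L : G →+ (κ → ℤ)) : ((nonneg (κ → ℤ)).comap L).FG := by
  obtain ⟨m, π, hπ⟩ := Module.Finite.exists_fin' ℕ G
  rw [← map_comap_eq_of_surjective (f := π.toAddMonoidHom) hπ ((nonneg _).comap L), comap_comap]
  exact (fg_comap_nonneg_of_wellQuasiOrderedLE _).map _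

end AddSubmonoid

/-- The coordinate ring of an affine toric variety is of finite type over ℂ:
the monoid algebra of the lattice points of a rational polyhedral cone is a
finitely generated ℂ-algebra (a consequence of Gordan's Lemma). -/
theorem toric_coordinate_ring_finiteType
    (n k : ℕ) (v : Fin k → Fin n → ℤ)
    (M : AddSubmonoid (Fin n → ℤ))
    (hM : (M : Set (Fin n → ℤ)) = {x : Fin n → ℤ | ∀ i, 0 ≤ ∑ j, v i j * x j}) :
    Algebra.FiniteType ℂ (AddMonoidAlgebra ℂ M) := by
  have hM_cone : M = (AddSubmonoid.nonneg (Fin k → ℤ)).comap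
      (Matrix.mulVecLin (Matrix.of v)).toAddMonoidHom := by
    apply SetLike.ext'
    rw [hM]
    ext x
    simp [Pi.le_def, Matrix.mulVec, dotProduct]
  have : AddMonoid.FG M := by
    rw [AddMonoid.fg_iff_addSubmonoid_fg, hM_cone]
    exact AddSubmonoid.fg_comap_nonneg_s16 _
  infer_instance
end
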